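/- There is a Δ⁰₂ embedding f : ℕ^ℕ → ℕ^ℕ whose range is a closed subset of ℕ^ℕ and such that f(X) is a diagonally non-computable function for every X ∈ ℕ^ℕ. -/

import Mathlib

/-- The list of the first `n` values of `g`. -/
def funToList (g : ℕ → ℕ) (n : ℕ) : List ℕ := (List.range n).map g

open Classical in
/-- Characteristic (partial) function of a set of naturals, used as an oracle. -/
noncomputable def chi (A : Set ℕ) : ℕ →. ℕ := fun n => Part.some (if n ∈ A then 1 else 0)

/-- A total function regarded as a partial oracle. -/
def totalize (g : ℕ → ℕ) : ℕ →. ℕ := fun n => Part.some (g n)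

/-- Codes for oracle Turing machines (partial recursive functionals). -/
inductive OCode : Type
  | zero | succ | left | right | oracle
  | pair (a b : OCode) | comp (a b : OCode) | prec (a b : OCode) | rfind' (a : OCode)

/-- Evaluation of an oracle code with oracle `g`. -/
def OCode.eval (g : ℕ →. ℕ) : OCode → ℕ →. ℕ
  | .zero => pure 0
  | .succ => fun n => Part.some (n + 1)
  | .left => fun n => Part.some (Nat.unpair n).1
  | .right => fun n => Part.some (Nat.unpair n).2
  | .oracle => g
  | .pair a b => fun n => Nat.pair <$> OCode.eval g a n <*> OCode.eval g b n
  | .comp a b => fun n => OCode.eval g b n >>= OCode.eval g a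
  | .prec a b =>
      Nat.unpaired fun m n =>
        n.rec (OCode.eval g a m) fun y IH => do
          let i ← IH
          OCode.eval g b (Nat.pair m (Nat.pair y i))
  | .rfind' a =>
      Nat.unpaired fun m n =>
        (Nat.rfind fun k => (fun x => x = 0) <$> OCode.eval g a (Nat.pair m (k + n))).map (· + n)

/-- A surjective numbering of oracle codes. -/
def OCode.ofNat : ℕ → OCode
  | 0 => .zero
  | 1 => .succ
  | 2 => .left
  | 3 => .right
  | 4 => .oracle
  | n + 5 =>
    let m := n.div2.div2
    have hm : m < n + 5 := by
      simp only [m, Nat.div2_val]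
      exact lt_of_le_of_lt (le_trans (Nat.div_le_self _ _) (Nat.div_le_self _ _)) (by omega)
    have _m1 : m.unpair.1 < n + 5 := lt_of_le_of_lt m.unpair_left_le hm
    have _m2 : m.unpair.2 < n + 5 := lt_of_le_of_lt m.unpair_right_le hm
    match n.bodd, n.div2.bodd with
    | false, false => .pair (OCode.ofNat m.unpair.1) (OCode.ofNat m.unpair.2)
    | false, true  => .comp (OCode.ofNat m.unpair.1) (OCode.ofNat m.unpair.2)
    | true , false => .prec (OCode.ofNat m.unpair.1) (OCode.ofNat m.unpair.2)
    | true , true  => .rfind' (OCode.ofNat m)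
decreasing_by
  all_goals (try simp_wf)
  all_goals first
    | exact Nat.le_of_lt_succ _m1
    | exact Nat.le_of_lt_succ _m2
    | exact Nat.le_of_lt_succ hm
    | exact _m1
    | exact _m2
    | exact hm

/-- `{e}^g`, the `e`-th oracle machine with oracle `g`. -/
def OEval (e : ℕ) (g : ℕ →. ℕ) : ℕ →. ℕ := (OCode.ofNat e).eval g

/-- `{e}`, the `e`-th (ordinary) partial recursive function. -/
def phi (e : ℕ) : ℕ →. ℕ := (Denumerable.ofNat Nat.Partrec.Code e).eval

/-- `W_e`, the `e`-th computably enumerable set. -/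
def We (e : ℕ) : Set ℕ := {n | (phi e n).Dom}

/-- `A` is computably enumerable. -/
def CE (A : Set ℕ) : Prop := ∃ e : ℕ, A = We e

/-- `A` is Δ⁰₂ (limit computable). -/
def Delta02 (A : Set ℕ) : Prop :=
  ∃ F : ℕ → ℕ → Bool, Computable₂ F ∧ ∀ x, ∃ N, ∀ s ≥ N, (F s x = true ↔ x ∈ A)

/-- Π⁰₂ subsets of ℕ. -/
def Pi2 (S : Set ℕ) : Prop :=
  ∃ R : ℕ × ℕ × ℕ → Bool, Computable R ∧ S = {e | ∀ a, ∃ b, R (e, a, b) = true}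

/-- Π⁰₃ subsets of ℕ. -/
def Pi3 (S : Set ℕ) : Prop :=
  ∃ R : ℕ × ℕ × ℕ × ℕ → Bool, Computable R ∧ S = {e | ∀ a, ∃ b, ∀ c, R (e, a, b, c) = true}

/-- Π⁰₄ subsets of ℕ. -/
def Pi4 (S : Set ℕ) : Prop :=
  ∃ R : ℕ × ℕ × ℕ × ℕ × ℕ → Bool, Computable R ∧
    S = {e | ∀ a, ∃ b, ∀ c, ∃ d, R (e, a, b, c, d) = true}

/-- Π¹₁ subsets of ℕ (Kleene normal form). -/
def Pi11 (S : Set ℕ) : Prop :=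
  ∃ R : ℕ × List ℕ → Bool, Computable R ∧
    S = {e | ∀ f : ℕ → ℕ, ∃ n, R (e, funToList f n) = true}

/-- Many-one reducibility. -/
def ManyOneRed (T S : Set ℕ) : Prop := ∃ h : ℕ → ℕ, Computable h ∧ ∀ e, e ∈ T ↔ h e ∈ S

def Pi2Complete (S : Set ℕ) : Prop := Pi2 S ∧ ∀ T, Pi2 T → ManyOneRed T S
def Pi3Complete (S : Set ℕ) : Prop := Pi3 S ∧ ∀ T, Pi3 T → ManyOneRed T S
def Pi4Complete (S : Set ℕ) : Prop := Pi4 S ∧ ∀ T, Pi4 T → ManyOneRed T S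
def Pi11Complete (S : Set ℕ) : Prop := Pi11 S ∧ ∀ T, Pi11 T → ManyOneRed T S

/-- `g` is an `n`-bounded diagonally non-computable function. -/
def DNCb (n : ℕ) (g : ℕ → ℕ) : Prop := (∀ x, g x < n) ∧ ∀ x y, y ∈ phi x x → g x ≠ y

/-- `g` is diagonally non-computable. -/
def DNCfun (g : ℕ → ℕ) : Prop := ∀ x y, y ∈ phi x x → g x ≠ y

/-- `A` is immune: infinite with no infinite c.e. subset. -/
def Immune (A : Set ℕ) : Prop := A.Infinite ∧ ∀ B, CE B → B.Infinite → ¬B ⊆ A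

/-- `A` is bi-immune. -/
def BiImmune (A : Set ℕ) : Prop := Immune A ∧ Immune Aᶜ

/-- `f` is strongly non-recursive. -/
def SNR (f : ℕ → ℕ) : Prop :=
  ∀ h : ℕ → ℕ, Computable h → ∀ᶠ n in Filter.atTop, f n ≠ h n

/-- A canonical numbering of all finite sets (presented as lists). -/
def CanonicalNumbering (H : ℕ → List ℕ) : Prop :=
  Computable H ∧ ∀ S : Finset ℕ, ∃ e, (H e).toFinset = S

/-- `R` is canonically immune. -/
def CanonImmune (R : Set ℕ) : Prop :=
  R.Infinite ∧ ∃ h : ℕ → ℕ, Computable h ∧ ∀ H, CanonicalNumbering H →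
    ∀ᶠ e in Filter.atTop, (∀ x ∈ H e, x ∈ R) → (H e).toFinset.card ≤ h e

/-- A Medvedev reduction of `F` (class of total functions) to `G` (class of partial oracles):
a single code `e` such that `{e}^g` is total and in `F` for every `g ∈ G`. -/
def MedvedevRed (F : Set (ℕ → ℕ)) (G : Set (ℕ →. ℕ)) : Prop :=
  ∃ e : ℕ, ∀ g ∈ G, ∃ f ∈ F, ∀ x, OEval e g x = Part.some (f x)

/-- The set `G[F]` of `G`-universal `F`-codes, for classes of partial oracles `G`
and total functions `F`. -/
def UnivCodes (G : Set (ℕ →. ℕ)) (F : Set (ℕ → ℕ)) : Set ℕ :=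
  {e | ∀ g ∈ G, ∃ f ∈ F, ∀ x, OEval e g x = Part.some (f x)}

/-- The set `G[F]` with total oracles. -/
def UnivCodesT (G : Set (ℕ → ℕ)) (F : Set (ℕ → ℕ)) : Set ℕ :=
  {e | ∀ g ∈ G, ∃ f ∈ F, ∀ x, OEval e (totalize g) x = Part.some (f x)}

open Classical in
noncomputable def UnivCodesSet (A : Set (ℕ → ℕ)) (B : Set (Set ℕ)) : Set ℕ :=
  {e | ∀ Y ∈ A, ∃ S ∈ B, ∀ x, OEval e (totalize Y) x = Part.some (if x ∈ S then 1 else 0)}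

/-- Π¹₁ classes of functions. -/
def Pi11Fun (C : Set (ℕ → ℕ)) : Prop :=
  ∃ R : List ℕ × List ℕ → Bool, Computable R ∧
    C = {f | ∀ g : ℕ → ℕ, ∃ n, R (funToList f n, funToList g n) = true}

/-- Σ¹₁ classes of functions. -/
def Sigma11Fun (C : Set (ℕ → ℕ)) : Prop :=
  ∃ R : List ℕ × List ℕ → Bool, Computable R ∧
    C = {f | ∃ g : ℕ → ℕ, ∀ n, R (funToList f n, funToList g n) = true}

/-- Hyperarithmetic (Δ¹₁) classes of functions. -/
def Hyp (C : Set (ℕ → ℕ)) : Prop := Pi11Fun C ∧ Sigma11Fun C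

/-- Hyperarithmetic classes of sets, via characteristic functions. -/
def HypSet (C : Set (Set ℕ)) : Prop :=
  Hyp {f | (∀ n, f n ≤ 1) ∧ {n | f n = 1} ∈ C}

/-- `B` is a tail set: closed under finite modifications. -/
def TailSet (B : Set (Set ℕ)) : Prop :=
  ∀ S T : Set ℕ, (S \ T ∪ T \ S).Finite → S ∈ B → T ∈ B

/-- Proper extension of finite strings. -/
def StrictPrefix (α β : List ℕ) : Prop := α <+: β ∧ α ≠ β

/-- A `Δ⁰₂` embedding of Baire space, given by a uniformly computable sequence of
`≺`-isomorphisms on finite strings converging pointwise to `fstar`, inducing `toFun`. -/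
structure Delta02Embedding where
  fs : ℕ → List ℕ → List ℕ
  fstar : List ℕ → List ℕ
  toFun : (ℕ → ℕ) → (ℕ → ℕ)
  computable : Computable₂ fs
  iso : ∀ s α β, StrictPrefix α β ↔ StrictPrefix (fs s α) (fs s β)
  limit : ∀ α, ∃ N, ∀ s ≥ N, fs s α = fstar α
  union : ∀ X n, fstar (funToList X n) = funToList (toFun X) (fstar (funToList X n)).length
  unbounded : ∀ X k, ∃ n, k ≤ (fstar (funToList X n)).length

/-- Π⁰₂ classes of functions. -/
def Pi02Class (P : Set (ℕ → ℕ)) : Prop :=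
  ∃ h : ℕ → ℕ → List ℕ, Computable₂ h ∧
    P = {X | ∀ n, ∃ s, h n s = funToList X (h n s).length}

/-- `{e}` is total. -/
def TotCode (e : ℕ) : Prop := ∀ i, (phi e i).Dom

/-- The computable tree coded by `e`: the downward closure of `{ρ_i : {e}(i) = 1}`. -/
def TreeOf (e : ℕ) : Set (List ℕ) :=
  {σ | ∃ τ : List ℕ, σ <+: τ ∧ ∃ i : ℕ, Denumerable.ofNat (List ℕ) i = τ ∧ 1 ∈ phi e i}

/-- Codes of total functions whose coded tree has no infinite branch. -/
def NoPath : Set ℕ :=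
  {e | TotCode e ∧ ¬∃ X : ℕ → ℕ, ∀ n, funToList X n ∈ TreeOf e}


/-! The string `α` is sent to the string whose `n`-th entry is `2c` or `2c + 1`, where `c` codes
`α ↾ (n + 1)` (not `α ↾ n`, so that every entry carries information about `α`), and the parity is
chosen so that the entry differs from `{n}(n)`; at stage `s` the choice consults `{n}_s(n)`, which
eventually settles. Halving an entry recovers the prefix it codes, so each `f_s` preserves and
reflects `≺`, and `Y ↦ (m ↦ (decode (Y m / 2))(m))` is a continuous left inverse of the limit map
`f`; the range of a continuous map with a continuous left inverse into a Hausdorff space is closed.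
-/

namespace DNCEmbedding

open Filter Encodable Nat.Partrec.Code

def prefixMap (v : ℕ → ℕ → ℕ) (α : List ℕ) : List ℕ :=
  (List.range α.length).map fun n => v n (encode (α.take (n + 1)))

@[simp]
lemma length_prefixMap (v : ℕ → ℕ → ℕ) (α : List ℕ) : (prefixMap v α).length = α.length := by
  simp [prefixMap]

lemma prefixMap_take (v : ℕ → ℕ → ℕ) (α : List ℕ) (k : ℕ) :
    prefixMap v (α.take k) = (prefixMap v α).take k := by
  simp only [prefixMap, List.length_take, ← List.map_take, List.take_range]
  refine List.map_congr_left fun n hn => ?_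
  rw [List.mem_range] at hn
  rw [List.take_take, min_eq_left (by omega)]

lemma prefixMap_prefix_of_prefix {v : ℕ → ℕ → ℕ} {α β : List ℕ} (h : α <+: β) :
    prefixMap v α <+: prefixMap v β := by
  rw [List.prefix_iff_eq_take.1 h, prefixMap_take]
  exact List.take_prefix _ _

lemma prefix_of_prefixMap_prefix {v : ℕ → ℕ → ℕ} (hv : ∀ n, Function.Injective (v n))
    {α β : List ℕ} (h : prefixMap v α <+: prefixMap v β) : α <+: β := by
  obtain hα | ⟨n, hα⟩ : α.length = 0 ∨ ∃ n, α.length = n + 1 := by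
    cases α.length <;> simp
  · simp [List.length_eq_zero_iff.1 hα]
  -- the last entry of `prefixMap v α` encodes all of `α`
  have hlast := h.getElem (i := n) (by simp [hα])
  simp only [prefixMap, List.getElem_map, List.getElem_range, ← hα, List.take_length] at hlast
  rw [List.prefix_iff_eq_take]
  exact encode_injective (hv n hlast)

lemma strictPrefix_iff_prefix_and_length_lt {α β : List ℕ} :
    StrictPrefix α β ↔ α <+: β ∧ α.length < β.length :=
  ⟨fun ⟨h, hne⟩ => ⟨h, h.length_le.lt_of_ne fun hl => hne (h.eq_of_length hl)⟩,
    fun ⟨h, hlt⟩ => ⟨h, by rintro rfl; exact hlt.false⟩⟩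

lemma strictPrefix_iff_strictPrefix_prefixMap {v : ℕ → ℕ → ℕ}
    (hv : ∀ n, Function.Injective (v n)) (α β : List ℕ) :
    StrictPrefix α β ↔ StrictPrefix (prefixMap v α) (prefixMap v β) := by
  simp only [strictPrefix_iff_prefix_and_length_lt, length_prefixMap]
  exact and_congr_left' ⟨prefixMap_prefix_of_prefix, prefix_of_prefixMap_prefix hv⟩

lemma prefixMap_funToList (v : ℕ → ℕ → ℕ) (X : ℕ → ℕ) (n : ℕ) :
    prefixMap v (funToList X n) = funToList (fun m => v m (encode (funToList X (m + 1)))) n := by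
  simp only [prefixMap, funToList, List.length_map, List.length_range]
  refine List.map_congr_left fun m hm => ?_
  rw [List.mem_range] at hm
  rw [← List.map_take, List.take_range, min_eq_left (by omega)]

lemma eventually_prefixMap_eq {ι : Type*} {l : Filter ι} {v : ι → ℕ → ℕ → ℕ}
    {w : ℕ → ℕ → ℕ} (h : ∀ n c, ∀ᶠ i in l, v i n c = w n c) (α : List ℕ) :
    ∀ᶠ i in l, prefixMap (v i) α = prefixMap w α := by
  filter_upwards [(eventually_all_finset (Finset.range α.length)).2
    fun n _ => h n (encode (α.take (n + 1)))] with i hi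
  exact List.map_congr_left fun n hn => hi n (by simpa using hn)

lemma primrec₂_prefixMap {σ : Type*} [Primcodable σ] {v : σ → ℕ → ℕ → ℕ}
    (hv : Primrec fun p : σ × ℕ × ℕ => v p.1 p.2.1 p.2.2) :
    Primrec₂ fun s α => prefixMap (v s) α :=
  Primrec.list_map (Primrec.list_range.comp (Primrec.list_length.comp Primrec.snd))
    (hv.comp ((Primrec.fst.comp Primrec.fst).pair (Primrec.snd.pair (Primrec.encode.comp
      (Primrec.list_take.comp (Primrec.succ.comp Primrec.snd)
        (Primrec.snd.comp Primrec.fst)))))).to₂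

lemma continuous_comp_funToList (g : List ℕ → ℕ) (k : ℕ) :
    Continuous fun X : ℕ → ℕ => g (funToList X k) := by
  have hofFn (X : ℕ → ℕ) : funToList X k = List.ofFn fun i : Fin k => X i :=
    List.ext_getElem (by simp [funToList]) (by simp [funToList])
  simp only [hofFn]
  exact (continuous_of_discreteTopology (f := fun v : Fin k → ℕ => g (List.ofFn v))).comp
    (continuous_pi fun i => continuous_apply (i : ℕ))

def avoidDiagAt (s n c : ℕ) : ℕ :=
  if evaln s (Denumerable.ofNat Nat.Partrec.Code n) n = some (2 * c) then 2 * c + 1 else 2 * c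

open Classical in
noncomputable def avoidDiag (n c : ℕ) : ℕ :=
  if 2 * c ∈ phi n n then 2 * c + 1 else 2 * c

lemma leftInverse_div_two_avoidDiagAt (s n : ℕ) : Function.LeftInverse (· / 2) (avoidDiagAt s n) :=
  fun c => by
    show avoidDiagAt s n c / 2 = c
    unfold avoidDiagAt; split <;> omega

lemma leftInverse_div_two_avoidDiag (n : ℕ) : Function.LeftInverse (· / 2) (avoidDiag n) :=
  fun c => by
    show avoidDiag n c / 2 = c
    unfold avoidDiag; split <;> omega

lemma avoidDiag_ne {n y : ℕ} (hy : y ∈ phi n n) (c : ℕ) : avoidDiag n c ≠ y := by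
  unfold avoidDiag
  split_ifs with h
  · rw [Part.mem_unique hy h]; omega
  · rintro rfl; exact h hy

lemma eventually_avoidDiagAt_eq (n c : ℕ) : ∀ᶠ s in atTop, avoidDiagAt s n c = avoidDiag n c := by
  by_cases h : 2 * c ∈ phi n n
  · obtain ⟨k, hk⟩ := evaln_complete.1 h
    filter_upwards [eventually_ge_atTop k] with s hs
    simp [avoidDiagAt, avoidDiag, h, Option.mem_def.1 (evaln_mono hs hk)]
  · have hnever (s : ℕ) : evaln s (Denumerable.ofNat Nat.Partrec.Code n) n ≠ some (2 * c) :=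
      fun he => h (evaln_sound he)
    exact Eventually.of_forall fun s => by simp [avoidDiagAt, avoidDiag, h, hnever s]

lemma primrec_avoidDiagAt : Primrec fun p : ℕ × ℕ × ℕ => avoidDiagAt p.1 p.2.1 p.2.2 := by
  have hc : Primrec fun p : ℕ × ℕ × ℕ => 2 * p.2.2 :=
    Primrec.nat_mul.comp (Primrec.const 2) (Primrec.snd.comp Primrec.snd)
  have hn : Primrec fun p : ℕ × ℕ × ℕ => p.2.1 := Primrec.fst.comp Primrec.snd
  exact Primrec.ite
    (Primrec.eq.comp (primrec_evaln.comp ((Primrec.fst.pair ((Primrec.ofNat _).comp hn)).pair hn))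
      (Primrec.option_some.comp hc))
    (Primrec.succ.comp hc) hc

noncomputable def dncMap (X : ℕ → ℕ) (n : ℕ) : ℕ :=
  avoidDiag n (encode (funToList X (n + 1)))

noncomputable def dncMapInv (Y : ℕ → ℕ) (m : ℕ) : ℕ :=
  (Denumerable.ofNat (List ℕ) (Y m / 2)).getD m 0

lemma leftInverse_dncMapInv_dncMap : Function.LeftInverse dncMapInv dncMap := fun X => by
  funext m
  simp [dncMapInv, dncMap, leftInverse_div_two_avoidDiag m _, funToList]

lemma continuous_dncMap : Continuous dncMap :=
  continuous_pi fun n => continuous_comp_funToList (fun α => avoidDiag n (encode α)) (n + 1)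

lemma continuous_dncMapInv : Continuous dncMapInv :=
  continuous_pi fun m => (continuous_of_discreteTopology
    (f := fun k => (Denumerable.ofNat (List ℕ) (k / 2)).getD m 0)).comp (continuous_apply m)

noncomputable def dncEmbedding : Delta02Embedding where
  fs s := prefixMap (avoidDiagAt s)
  fstar := prefixMap avoidDiag
  toFun := dncMap
  computable := (primrec₂_prefixMap primrec_avoidDiagAt).to_comp
  iso s := strictPrefix_iff_strictPrefix_prefixMap fun n =>
    (leftInverse_div_two_avoidDiagAt s n).injective
  limit α := eventually_atTop.1 (eventually_prefixMap_eq eventually_avoidDiagAt_eq α)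
  union X n := by rw [prefixMap_funToList]; simp [funToList, dncMap]
  unbounded X k := ⟨k, by simp [funToList]⟩

end DNCEmbedding

/-- there is a Δ⁰₂ embedding of Baire space into the DNC functions
with closed range. -/
theorem exists_delta02_embedding_into_dnc :
    ∃ E : Delta02Embedding,
      IsClosed (Set.range E.toFun) ∧ ∀ X : ℕ → ℕ, DNCfun (E.toFun X) :=
  ⟨DNCEmbedding.dncEmbedding,
    DNCEmbedding.leftInverse_dncMapInv_dncMap.isClosed_range DNCEmbedding.continuous_dncMapInv
      DNCEmbedding.continuous_dncMap,
    fun _ _ _ hy => DNCEmbedding.avoidDiag_ne hy _⟩
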